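/- arXiv:0807.1139 — 4 statements merged into one kernel-verified Lean document; each statement's English description precedes it below -/
import Mathlib

section
/- Let G = (L ∪ R, E) be a finite bipartite graph with edge weights w : E → ℝ≥0. Suppose M ⊆ E is a matching with the greedy domination property: every edge f ∈ E either belongs to M or shares an endpoint with some edge e ∈ M with w(e) ≥ w(f). Then for every matching M' ⊆ E, w(M') ≤ 2·w(M). (In particular, the matching produced by the greedy algorithm that processes edges in decreasing order of weight has weight at least half the weight of a maximum-weight matching.) -/
/-!
Charge every edge `f` of `M'` to an edge `e` of `M` that dominates it: `e = f` if `f ∈ M`,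
otherwise the heavier neighbouring edge given by the domination property. Every charged edge
`e` shares an endpoint with `f`, and since `M'` is a matching at most one of its edges meets
each of the two endpoints of `e`. So every edge of `M` is charged at most twice, by edges of
at most its weight.
-/

open Finset

namespace Finset

variable {ι κ M : Type*} [AddCommMonoid M] [PartialOrder M] [IsOrderedAddMonoid M]

theorem sum_le_nsmul_sum_of_card_fiber_le [DecidableEq κ] {s : Finset ι} {t : Finset κ}
    {g : ι → κ} {f : ι → M} {h : κ → M} (n : ℕ) (hg : ∀ i ∈ s, g i ∈ t)
    (hfh : ∀ i ∈ s, f i ≤ h (g i)) (hh : ∀ k ∈ t, 0 ≤ h k)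
    (hn : ∀ k ∈ t, #{i ∈ s | g i = k} ≤ n) :
    ∑ i ∈ s, f i ≤ n • ∑ k ∈ t, h k :=
  calc ∑ i ∈ s, f i
      ≤ ∑ i ∈ s, h (g i) := sum_le_sum hfh
    _ = ∑ k ∈ t, ∑ i ∈ s with g i = k, h k := (sum_fiberwise_of_maps_to' hg h).symm
    _ = ∑ k ∈ t, #{i ∈ s | g i = k} • h k := by simp only [sum_const]
    _ ≤ ∑ k ∈ t, n • h k := sum_le_sum fun k hk => nsmul_le_nsmul_left (hh k hk) (hn k hk)
    _ = n • ∑ k ∈ t, h k := (smul_sum ..).symm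

end Finset

section

variable {L R : Type*}

def IsBipartiteMatching (M : Finset (L × R)) : Prop :=
  ∀ e ∈ M, ∀ e' ∈ M, e ≠ e' → e.1 ≠ e'.1 ∧ e.2 ≠ e'.2

namespace IsBipartiteMatching

variable {M : Finset (L × R)}

theorem card_filter_fst_eq_le_one [DecidableEq L] (hM : IsBipartiteMatching M) (l : L) :
    #{f ∈ M | f.1 = l} ≤ 1 := by
  refine card_le_one.2 fun f hf f' hf' => ?_
  rw [mem_filter] at hf hf'
  by_contra hne
  exact (hM f hf.1 f' hf'.1 hne).1 (hf.2.trans hf'.2.symm)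

theorem card_filter_snd_eq_le_one [DecidableEq R] (hM : IsBipartiteMatching M) (r : R) :
    #{f ∈ M | f.2 = r} ≤ 1 := by
  refine card_le_one.2 fun f hf f' hf' => ?_
  rw [mem_filter] at hf hf'
  by_contra hne
  exact (hM f hf.1 f' hf'.1 hne).2 (hf.2.trans hf'.2.symm)

theorem card_filter_incident_le_two [DecidableEq L] [DecidableEq R]
    (hM : IsBipartiteMatching M) (e : L × R) :
    #{f ∈ M | f.1 = e.1 ∨ f.2 = e.2} ≤ 2 :=
  calc #{f ∈ M | f.1 = e.1 ∨ f.2 = e.2}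
      ≤ #{f ∈ M | f.1 = e.1} + #{f ∈ M | f.2 = e.2} := by
        rw [filter_or]; exact card_union_le _ _
    _ ≤ 1 + 1 := add_le_add (hM.card_filter_fst_eq_le_one _) (hM.card_filter_snd_eq_le_one _)

end IsBipartiteMatching

end

theorem greedy_matching_two_approx_general {L R : Type*}
    (E : Finset (L × R)) (w : L × R → NNReal) (M : Finset (L × R))
    (hdom : ∀ f ∈ E, f ∈ M ∨ ∃ e ∈ M, (e.1 = f.1 ∨ e.2 = f.2) ∧ w f ≤ w e)
    (M' : Finset (L × R)) (hM'E : M' ⊆ E)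
    (hM'match : ∀ e ∈ M', ∀ e' ∈ M', e ≠ e' → e.1 ≠ e'.1 ∧ e.2 ≠ e'.2) :
    ∑ e ∈ M', w e ≤ 2 * ∑ e ∈ M, w e := by
  classical
  have hcharge : ∀ f ∈ M', ∃ e ∈ M, (e.1 = f.1 ∨ e.2 = f.2) ∧ w f ≤ w e := fun f hf =>
    (hdom f (hM'E hf)).elim (fun hfM => ⟨f, hfM, Or.inl rfl, le_rfl⟩) id
  choose! charge hchargeM hincident hle using hcharge
  have hfiber : ∀ e ∈ M, #{f ∈ M' | charge f = e} ≤ 2 := fun e _ =>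
    calc #{f ∈ M' | charge f = e}
        ≤ #{f ∈ M' | f.1 = e.1 ∨ f.2 = e.2} := card_le_card fun f hf => by
          rw [mem_filter] at hf ⊢
          obtain ⟨hfM', rfl⟩ := hf
          exact ⟨hfM', (hincident f hfM').imp Eq.symm Eq.symm⟩
      _ ≤ 2 := IsBipartiteMatching.card_filter_incident_le_two hM'match e
  calc ∑ f ∈ M', w f
      ≤ 2 • ∑ e ∈ M, w e :=
        sum_le_nsmul_sum_of_card_fiber_le 2 hchargeM hle (fun _ _ => zero_le) hfiber
    _ = 2 * ∑ e ∈ M, w e := by rw [two_nsmul, two_mul]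

/-- **Greedy matching is a 2-approximation (bipartite, edge-weighted).**
A bipartite graph `G = (L ∪ R, E)` is modeled with edges `E : Finset (L × R)`,
each edge `(l, r)` having its `L`-endpoint `l` and `R`-endpoint `r`, and
weights `w : L × R → ℝ≥0`.  If `M ⊆ E` is a matching with the greedy
domination property (every edge of `E` is in `M` or shares an endpoint with an
edge of `M` of at least its weight), then any matching `M' ⊆ E` has
`w(M') ≤ 2 · w(M)`. -/
theorem greedy_matching_two_approx {L R : Type*}
    (E : Finset (L × R)) (w : L × R → NNReal) (M : Finset (L × R))
    (hME : M ⊆ E)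
    (hMmatch : ∀ e ∈ M, ∀ e' ∈ M, e ≠ e' → e.1 ≠ e'.1 ∧ e.2 ≠ e'.2)
    (hdom : ∀ f ∈ E, f ∈ M ∨ ∃ e ∈ M, (e.1 = f.1 ∨ e.2 = f.2) ∧ w f ≤ w e)
    (M' : Finset (L × R)) (hM'E : M' ⊆ E)
    (hM'match : ∀ e ∈ M', ∀ e' ∈ M', e ≠ e' → e.1 ≠ e'.1 ∧ e.2 ≠ e'.2) :
    ∑ e ∈ M', w e ≤ 2 * ∑ e ∈ M, w e :=
  greedy_matching_two_approx_general E w M hdom M' hM'E hM'match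
end

section
/- Let H be a finite hypergraph whose edges are nonempty sets of vertices each of cardinality at most d + 1, with edge weights w : E → ℝ≥0. Suppose M ⊆ E is a set of pairwise disjoint edges with the greedy domination property: every edge f ∈ E either belongs to M or intersects some edge e ∈ M with w(e) ≥ w(f). Then for every set M' ⊆ E of pairwise disjoint edges, w(M') ≤ (d+1)·w(M). (In particular, the greedy algorithm that processes hyperedges in decreasing order of weight returns a (d+1)-approximation to the maximum-weight disjoint edge set.) -/
/-!
Charge every edge `f` of `M'` to an edge `c f ∈ M` that meets it and weighs at least as much
(`f` itself if `f ∈ M`). The edges charged to a fixed `e ∈ M` are pairwise disjoint and each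
meets `e`, so there are at most `|e| ≤ d + 1` of them; hence `w(M') ≤ (d + 1) · w(M)`.
-/

open Finset

theorem Finset.sum_le_mul_sum_of_card_fiber_le {ι κ R : Type*} [DecidableEq κ] [CommSemiring R]
    [PartialOrder R] [IsOrderedRing R] {s : Finset ι} {t : Finset κ} {c : ι → κ}
    {f : ι → R} {g : κ → R} {n : ℕ} (hc : ∀ i ∈ s, c i ∈ t) (hfg : ∀ i ∈ s, f i ≤ g (c i))
    (hg : ∀ j ∈ t, 0 ≤ g j) (hfiber : ∀ j ∈ t, #{i ∈ s | c i = j} ≤ n) :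
    ∑ i ∈ s, f i ≤ n * ∑ j ∈ t, g j := by
  calc ∑ i ∈ s, f i ≤ ∑ i ∈ s, g (c i) := sum_le_sum hfg
    _ = ∑ j ∈ t, ∑ i ∈ s with c i = j, g (c i) := (sum_fiberwise_of_maps_to hc _).symm
    _ = ∑ j ∈ t, (#{i ∈ s | c i = j} : R) * g j := by
        refine sum_congr rfl fun j _ ↦ ?_
        rw [sum_congr rfl fun i hi ↦ by rw [(mem_filter.1 hi).2], sum_const, nsmul_eq_mul]
    _ ≤ ∑ j ∈ t, (n : R) * g j :=
        sum_le_sum fun j hj ↦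
          mul_le_mul_of_nonneg_right (Nat.mono_cast (hfiber j hj)) (hg j hj)
    _ = n * ∑ j ∈ t, g j := (mul_sum _ _ _).symm

theorem Finset.card_le_card_of_pairwiseDisjoint_of_forall_not_disjoint {α : Type*}
    [DecidableEq α] {s : Finset (Finset α)} {e : Finset α}
    (hs : (s : Set (Finset α)).PairwiseDisjoint id) (he : ∀ f ∈ s, ¬Disjoint e f) : #s ≤ #e :=
  calc #s ≤ #(s.biUnion (e ∩ ·)) :=
        card_le_card_biUnion (hs.mono fun _ ↦ inter_subset_right)
          fun f hf ↦ not_disjoint_iff_nonempty_inter.1 (he f hf)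
    _ ≤ #e := card_le_card (biUnion_subset.2 fun _ _ ↦ inter_subset_left)

theorem greedy_hypergraph_approx_general {V : Type*} [DecidableEq V] (d : ℕ)
    (E : Finset (Finset V)) (w : Finset V → NNReal)
    (hE : ∀ e ∈ E, e.Nonempty ∧ e.card ≤ d + 1)
    (M : Finset (Finset V)) (hME : M ⊆ E)
    (hdom : ∀ f ∈ E, f ∈ M ∨ ∃ e ∈ M, ¬ Disjoint e f ∧ w f ≤ w e)
    (M' : Finset (Finset V)) (hM'E : M' ⊆ E)
    (hM'disj : ∀ e ∈ M', ∀ e' ∈ M', e ≠ e' → Disjoint e e') :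
    ∑ e ∈ M', w e ≤ ((d : NNReal) + 1) * ∑ e ∈ M, w e := by
  have hcharge : ∀ f ∈ M', ∃ e ∈ M, ¬Disjoint e f ∧ w f ≤ w e := fun f hf ↦
    (hdom f (hM'E hf)).elim
      (fun hfM ↦ ⟨f, hfM, by simpa using (hE f (hM'E hf)).1.ne_empty, le_rfl⟩) id
  choose! c hcM hcmeets hcw using hcharge
  have hfiber : ∀ e ∈ M, #{f ∈ M' | c f = e} ≤ d + 1 := fun e he ↦
    (card_le_card_of_pairwiseDisjoint_of_forall_not_disjoint
      (fun f hf f' hf' ↦ hM'disj f (mem_filter.1 hf).1 f' (mem_filter.1 hf').1)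
      fun f hf ↦ (mem_filter.1 hf).2 ▸ hcmeets f (mem_filter.1 hf).1).trans (hE e (hME he)).2
  exact_mod_cast sum_le_mul_sum_of_card_fiber_le hcM hcw (fun _ _ ↦ zero_le) hfiber

/-- **Greedy is a (d+1)-approximation for max-weight disjoint edge sets in
hypergraphs with edges of size at most `d+1`.**  A hypergraph on vertex type
`V` has edges `E : Finset (Finset V)`, each nonempty of cardinality at most
`d + 1`, with weights `w : Finset V → ℝ≥0`.  If `M ⊆ E` is a set of pairwise
disjoint edges with the greedy domination property, then any set `M' ⊆ E` of
pairwise disjoint edges satisfies `w(M') ≤ (d+1) · w(M)`. -/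
theorem greedy_hypergraph_approx {V : Type*} [DecidableEq V] (d : ℕ)
    (E : Finset (Finset V)) (w : Finset V → NNReal)
    (hE : ∀ e ∈ E, e.Nonempty ∧ e.card ≤ d + 1)
    (M : Finset (Finset V)) (hME : M ⊆ E)
    (hMdisj : ∀ e ∈ M, ∀ e' ∈ M, e ≠ e' → Disjoint e e')
    (hdom : ∀ f ∈ E, f ∈ M ∨ ∃ e ∈ M, ¬ Disjoint e f ∧ w f ≤ w e)
    (M' : Finset (Finset V)) (hM'E : M' ⊆ E)
    (hM'disj : ∀ e ∈ M', ∀ e' ∈ M', e ≠ e' → Disjoint e e') :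
    ∑ e ∈ M', w e ≤ ((d : NNReal) + 1) * ∑ e ∈ M, w e :=
  greedy_hypergraph_approx_general d E w hE M hME hdom M' hM'E hM'disj
end

section
/- Let p ∈ (0, 1) and let (P_i)_{i≥1} and (a_i)_{i≥1} be sequences of nonnegative reals such that P_{i+1} ≤ (1−p)·P_i for all i ≥ 1, and (a_i) is nonincreasing. Then both series ∑_{i=1}^∞ P_i·a_i and ∑_{i=1}^∞ i·P_i·a_i converge, and ∑_{i=1}^∞ P_i·a_i ≥ p · ∑_{i=1}^∞ i·P_i·a_i. (Equivalently, for nonnegative sequences (P_i), (w_i) with P_i ≤ (1−p)P_{i−1} and w_i ≤ (i/(i−1))·w_{i−1} for all i ≥ 2, one has ∑_{i≥1} P_i·w_i/i ≥ p·∑_{i≥1} P_i·w_i.) -/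
/-! With `f n = P n * a n` one has `f (n + 1) ≤ (1 - p) f n`, so `f` decays geometrically and both
series converge. Writing `S = ∑ f n` and `T = ∑ (n + 1) f n`, the shifted series
`∑ n f n = ∑ (n + 1) f (n + 1)` equals `T - S` and is at most `(1 - p) T`, whence `p T ≤ S`. -/

section GeometricDecay

variable {f : ℕ → ℝ} {q : ℝ}

lemma summable_succ_mul_geometric_of_lt_one (hq0 : 0 ≤ q) (hq1 : q < 1) :
    Summable fun n : ℕ => ((n : ℝ) + 1) * q ^ n := by
  have hnorm : ‖q‖ < 1 := by rwa [Real.norm_eq_abs, abs_of_nonneg hq0]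
  simpa [add_mul] using
    (summable_pow_mul_geometric_of_norm_lt_one 1 hnorm).add (summable_geometric_of_lt_one hq0 hq1)

lemma summable_succ_mul_of_le_mul_succ (hf : ∀ n, 0 ≤ f n) (hq0 : 0 ≤ q) (hq1 : q < 1)
    (h : ∀ n, f (n + 1) ≤ q * f n) : Summable fun n : ℕ => ((n : ℝ) + 1) * f n := by
  refine .of_nonneg_of_le (fun n => mul_nonneg (by positivity) (hf n)) (fun n => ?_)
    ((summable_succ_mul_geometric_of_lt_one hq0 hq1).mul_right (f 0))
  calc ((n : ℝ) + 1) * f n ≤ ((n : ℝ) + 1) * (q ^ n * f 0) := by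
        gcongr; exact le_geom hq0 n fun k _ => h k
    _ = ((n : ℝ) + 1) * q ^ n * f 0 := by ring

lemma one_sub_mul_tsum_succ_mul_le_tsum (h : ∀ n, f (n + 1) ≤ q * f n) (hf : Summable f)
    (hT : Summable fun n : ℕ => ((n : ℝ) + 1) * f n) :
    (1 - q) * ∑' n : ℕ, ((n : ℝ) + 1) * f n ≤ ∑' n, f n := by
  have hN : Summable fun n : ℕ => (n : ℝ) * f n := by simpa [add_mul] using hT.sub hf
  have hsplit : ∑' n : ℕ, ((n : ℝ) + 1) * f n = ∑' n : ℕ, (n : ℝ) * f n + ∑' n, f n := by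
    rw [← hN.tsum_add hf]; simp only [add_mul, one_mul]
  have hshift : ∑' n : ℕ, (n : ℝ) * f n = ∑' n : ℕ, ((n : ℝ) + 1) * f (n + 1) := by
    rw [hN.tsum_eq_zero_add]; simp
  have hshift_le : ∑' n : ℕ, ((n : ℝ) + 1) * f (n + 1) ≤ q * ∑' n : ℕ, ((n : ℝ) + 1) * f n := by
    rw [← tsum_mul_left]
    refine Summable.tsum_le_tsum (fun n => ?_) ?_ (hT.mul_left q)
    · calc ((n : ℝ) + 1) * f (n + 1) ≤ ((n : ℝ) + 1) * (q * f n) := by gcongr; exact h n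
        _ = q * (((n : ℝ) + 1) * f n) := by ring
    · simpa using (summable_nat_add_iff 1).mpr hN
  linarith

end GeometricDecay

/-- **Key analytic inequality for the tighter pruning analysis.**  Let
`p ∈ (0,1)` and let `(P i)` and `(a i)` (indexed here by `ℕ`, with index `n`
standing for the `(n+1)`-st term) be nonnegative sequences with
`P (n+1) ≤ (1 − p) · P n` and `(a n)` nonincreasing.  Then the series
`∑ P_i · a_i` and `∑ i · P_i · a_i` both converge, and
`∑ P_i · a_i ≥ p · ∑ i · P_i · a_i`. -/
theorem geometric_decay_price_inequality (p : ℝ) (hp : p ∈ Set.Ioo (0 : ℝ) 1)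
    (P a : ℕ → ℝ) (hP0 : ∀ n, 0 ≤ P n) (ha0 : ∀ n, 0 ≤ a n)
    (hPdec : ∀ n, P (n + 1) ≤ (1 - p) * P n)
    (hadec : ∀ n, a (n + 1) ≤ a n) :
    Summable (fun n : ℕ => P n * a n) ∧
    Summable (fun n : ℕ => ((n : ℝ) + 1) * P n * a n) ∧
    p * ∑' n : ℕ, ((n : ℝ) + 1) * P n * a n ≤ ∑' n, P n * a n := by
  obtain ⟨hp0, hp1⟩ := hp
  have hf0 : ∀ n, 0 ≤ P n * a n := fun n => mul_nonneg (hP0 n) (ha0 n)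
  have hdecay : ∀ n, P (n + 1) * a (n + 1) ≤ (1 - p) * (P n * a n) := fun n => by
    rw [← mul_assoc]
    exact mul_le_mul (hPdec n) (hadec n) (ha0 _) (mul_nonneg (by linarith) (hP0 n))
  have hT := summable_succ_mul_of_le_mul_succ hf0 (by linarith) (by linarith) hdecay
  have hS : Summable fun n => P n * a n :=
    .of_nonneg_of_le hf0 (fun n => le_mul_of_one_le_left (hf0 n) (by simp)) hT
  have key := one_sub_mul_tsum_succ_mul_le_tsum hdecay hS hT
  rw [sub_sub_cancel] at key
  simp only [mul_assoc]
  exact ⟨hS, hT, key⟩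
end

section
/- Let H be a finite hypergraph with vertex set L ∪ R whose every edge contains exactly one vertex of L and at most d vertices of R, with edge weights w : E → ℝ≥0, and let p ∈ [0, 1]. For S ⊆ L, let E_S denote the set of edges whose L-vertex lies in S, and suppose M_S ⊆ E_S is a set of pairwise disjoint edges with the greedy domination property relative to E_S: every edge f ∈ E_S either belongs to M_S or intersects some e ∈ M_S with w(e) ≥ w(f). Then ∑_{S ⊆ L} p^{|S|} (1−p)^{|L|−|S|} · w(M_S) ≥ (p/(d+1)) · ν(L), where ν(L) is the maximum weight of a set of pairwise disjoint edges of H. -/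
/-!
Fix an independent set `N` of maximum weight `ν`. For a sample `S`, every edge of `N` whose
`L`-vertex is sampled is dominated by an edge of `M S` that it meets, and an edge `e` meets at most
`|e ∩ R| + 1 ≤ d + 1` pairwise disjoint edges (one through its `L`-vertex, one through each of its
`R`-vertices); charging each edge of `N` to its dominating edge gives
`w(N ∩ E_S) ≤ (d + 1) w(M S)`. Each edge of `N` lies in `E_S` with probability `p`, so the
left side averages to `p ν` over the random sample `S`.
-/

open Finset

theorem Finset.sum_filter_mem_pow_mul_pow {ι R : Type*} [DecidableEq ι] [CommSemiring R]
    {s : Finset ι} {a : ι} (ha : a ∈ s) (x y : R) :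
    ∑ t ∈ s.powerset with a ∈ t, x ^ #t * y ^ (#s - #t) = x * (x + y) ^ (#s - 1) := by
  rw [← insert_erase ha, sum_filter, sum_powerset_insert (notMem_erase a s),
    card_insert_of_notMem (notMem_erase a s), Nat.add_sub_cancel, ← sum_pow_mul_eq_add_pow,
    mul_sum]
  have hout : ∀ t ∈ (s.erase a).powerset, a ∉ t := fun t ht hat =>
    notMem_erase a s (mem_powerset.1 ht hat)
  rw [sum_eq_zero fun t ht => if_neg (hout t ht), zero_add]
  refine sum_congr rfl fun t ht => ?_
  rw [if_pos (mem_insert_self a t), card_insert_of_notMem (hout t ht), Nat.add_sub_add_right,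
    pow_succ']
  ring

theorem Fintype.sum_filter_mem_pow_mul_one_sub_pow {ι R : Type*} [Fintype ι] [DecidableEq ι]
    [CommRing R] (a : ι) (p : R) :
    ∑ S : Finset ι with a ∈ S, p ^ #S * (1 - p) ^ (Fintype.card ι - #S) = p := by
  rw [← powerset_univ, ← card_univ, sum_filter_mem_pow_mul_pow (mem_univ a)]
  simp

theorem Fintype.sum_pow_mul_one_sub_pow_mul_sum_filter {ι α R : Type*} [Fintype ι]
    [DecidableEq ι] [CommRing R] (p : R) (N : Finset α) (v : α → ι) (g : α → R) :
    ∑ S : Finset ι, p ^ #S * (1 - p) ^ (Fintype.card ι - #S) * ∑ f ∈ N with v f ∈ S, g f =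
      p * ∑ f ∈ N, g f := by
  simp_rw [sum_filter, mul_sum]
  rw [sum_comm]
  refine Finset.sum_congr rfl fun f _ => ?_
  simp_rw [mul_ite, mul_zero, ← sum_filter, ← sum_mul, sum_filter_mem_pow_mul_one_sub_pow]

section Hypergraph

variable {L R : Type*}

/-- Edges `(l, T)` stand for the hyperedges `{l} ∪ T` with `l ∈ L`, `T ⊆ R`. -/
def EdgesDisjoint (e f : L × Finset R) : Prop := e.1 ≠ f.1 ∧ Disjoint e.2 f.2

theorem card_le_of_forall_not_edgesDisjoint {F : Finset (L × Finset R)}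
    (hF : (F : Set (L × Finset R)).Pairwise EdgesDisjoint) {e : L × Finset R}
    (he : ∀ f ∈ F, ¬EdgesDisjoint e f) : #F ≤ #e.2 + 1 := by
  classical
  have hdisj : (F : Set (L × Finset R)).PairwiseDisjoint (fun f => f.2 ∩ e.2) :=
    fun f hf f' hf' hne => (hF hf hf' hne).2.mono inter_subset_left inter_subset_left
  have hmeetR : #(F.biUnion fun f => f.2 ∩ e.2) ≤ #e.2 :=
    card_le_card (biUnion_subset.2 fun f _ => inter_subset_right)
  have hmeetL : #{f ∈ F | f.2 ∩ e.2 = ∅} ≤ 1 := by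
    have hL : ∀ g ∈ F, g.2 ∩ e.2 = ∅ → e.1 = g.1 := fun g hg hempty => by
      by_contra hne
      exact he g hg ⟨hne, disjoint_iff_inter_eq_empty.2 (by rw [inter_comm, hempty])⟩
    refine card_le_one.2 fun f hf f' hf' => ?_
    rw [mem_filter] at hf hf'
    by_contra hne
    exact (hF hf.1 hf'.1 hne).1 ((hL f hf.1 hf.2).symm.trans (hL f' hf'.1 hf'.2))
  have := card_le_card_biUnion_add_card_fiber hdisj
  omega

theorem sum_le_mul_sum_of_forall_exists_not_edgesDisjoint {A M : Finset (L × Finset R)}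
    {w : L × Finset R → NNReal} {d : ℕ} (hA : (A : Set (L × Finset R)).Pairwise EdgesDisjoint)
    (hM : ∀ e ∈ M, #e.2 ≤ d) (hdom : ∀ f ∈ A, ∃ e ∈ M, ¬EdgesDisjoint e f ∧ w f ≤ w e) :
    ∑ f ∈ A, w f ≤ (d + 1) * ∑ e ∈ M, w e := by
  classical
  calc ∑ f ∈ A, w f ≤ ∑ f ∈ A, ∑ e ∈ M with ¬EdgesDisjoint e f, w e := by
        refine sum_le_sum fun f hf => ?_
        obtain ⟨e, he, hmeet, hw⟩ := hdom f hf
        exact hw.trans (single_le_sum (fun _ _ => zero_le) (mem_filter.2 ⟨he, hmeet⟩))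
    _ = ∑ e ∈ M, #{f ∈ A | ¬EdgesDisjoint e f} * w e := by
        simp_rw [sum_filter]
        rw [sum_comm]
        simp_rw [← sum_filter, sum_const, nsmul_eq_mul]
    _ ≤ ∑ e ∈ M, (d + 1) * w e := by
        gcongr with e he
        exact_mod_cast (card_le_of_forall_not_edgesDisjoint (hA.mono (filter_subset _ _))
          fun f hf => (mem_filter.1 hf).2).trans (Nat.add_le_add_right (hM e he) 1)
    _ = (d + 1) * ∑ e ∈ M, w e := (mul_sum ..).symm

end Hypergraph

theorem sampled_greedy_hypergraph_expectation_general {L R : Type*} [Fintype L] (d : ℕ)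
    (E : Finset (L × Finset R)) (w : L × Finset R → NNReal)
    (hE : ∀ e ∈ E, e.2.card ≤ d)
    (p : ℝ) (hp0 : 0 ≤ p) (hp1 : p ≤ 1)
    (M : Finset L → Finset (L × Finset R))
    (hME : ∀ S, M S ⊆ E)
    (hdom : ∀ S : Finset L, ∀ f ∈ E, f.1 ∈ S →
      f ∈ M S ∨ ∃ e ∈ M S, (e.1 = f.1 ∨ ¬ Disjoint e.2 f.2) ∧ w f ≤ w e)
    (ν : NNReal)
    (hν : IsGreatest {x : NNReal | ∃ N ⊆ E,
      (∀ e ∈ N, ∀ e' ∈ N, e ≠ e' → e.1 ≠ e'.1 ∧ Disjoint e.2 e'.2) ∧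
      x = ∑ e ∈ N, w e} ν) :
    p / (d + 1) * (ν : ℝ) ≤
      ∑ S : Finset L,
        p ^ S.card * (1 - p) ^ (Fintype.card L - S.card) *
          ((∑ e ∈ M S, w e : NNReal) : ℝ) := by
  classical
  obtain ⟨N, hNE, hNind, rfl⟩ := hν.1
  have hN : (N : Set (L × Finset R)).Pairwise EdgesDisjoint := fun e he e' he' hne =>
    hNind e he e' he' hne
  have hcharge (S : Finset L) : ∑ f ∈ N with f.1 ∈ S, w f ≤ (d + 1) * ∑ e ∈ M S, w e := by
    refine sum_le_mul_sum_of_forall_exists_not_edgesDisjoint (hN.mono (filter_subset _ _))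
      (fun e he => hE e (hME S he)) fun f hf => ?_
    obtain ⟨hfN, hfS⟩ := mem_filter.1 hf
    rcases hdom S f (hNE hfN) hfS with hfM | ⟨e, he, hmeet, hw⟩
    · exact ⟨f, hfM, fun h => h.1 rfl, le_rfl⟩
    · exact ⟨e, he, not_and_or.2 (hmeet.imp not_not_intro id), hw⟩
  have h1p : 0 ≤ 1 - p := sub_nonneg.2 hp1
  calc p / (d + 1) * ((∑ e ∈ N, w e : NNReal) : ℝ)
      = (∑ S : Finset L, p ^ #S * (1 - p) ^ (Fintype.card L - #S) *
          ((∑ f ∈ N with f.1 ∈ S, w f : NNReal) : ℝ)) / (d + 1) := by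
        push_cast
        rw [Fintype.sum_pow_mul_one_sub_pow_mul_sum_filter]
        ring
    _ ≤ ∑ S : Finset L, p ^ #S * (1 - p) ^ (Fintype.card L - #S) *
          ((∑ e ∈ M S, w e : NNReal) : ℝ) := by
        rw [div_le_iff₀ (by positivity), sum_mul]
        simp_rw [mul_assoc]
        refine sum_le_sum fun S _ => mul_le_mul_of_nonneg_left ?_ (pow_nonneg hp0 _)
        refine mul_le_mul_of_nonneg_left ?_ (pow_nonneg h1p _)
        rw [mul_comm]
        exact_mod_cast hcharge S

/-- **Expected weight of the greedy independent edge set on a `p`-sample of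
`L` is at least `p · OPT / (d+1)` (HVM setting).**  A hypergraph on vertex
set `L ∪ R` whose every edge has exactly one vertex in `L` and at most `d`
vertices in `R` is modeled with edges `E : Finset (L × Finset R)`: an edge
`(l, T)` consists of its `L`-vertex `l` and its set `T` of `R`-vertices,
`|T| ≤ d`.  Two edges intersect iff they share their `L`-vertex or their
`R`-vertex sets intersect.  For every `S ⊆ L`, `M S ⊆ E` is a set of
pairwise disjoint edges with `L`-vertex in `S` satisfying the greedy
domination property relative to those edges.  With `ν` the maximum weight of
a set of pairwise disjoint edges of the hypergraph (characterized by
`IsGreatest`), we have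
`∑_{S ⊆ L} p^|S| (1−p)^{|L|−|S|} · w(M S) ≥ (p/(d+1)) · ν`. -/
theorem sampled_greedy_hypergraph_expectation {L R : Type*} [Fintype L] [Fintype R]
    [DecidableEq L] [DecidableEq R] (d : ℕ)
    (E : Finset (L × Finset R)) (w : L × Finset R → NNReal)
    (hE : ∀ e ∈ E, e.2.card ≤ d)
    (p : ℝ) (hp0 : 0 ≤ p) (hp1 : p ≤ 1)
    (M : Finset L → Finset (L × Finset R))
    (hME : ∀ S, M S ⊆ E)
    (hMS : ∀ S, ∀ e ∈ M S, e.1 ∈ S)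
    (hMind : ∀ S, ∀ e ∈ M S, ∀ e' ∈ M S, e ≠ e' → e.1 ≠ e'.1 ∧ Disjoint e.2 e'.2)
    (hdom : ∀ S : Finset L, ∀ f ∈ E, f.1 ∈ S →
      f ∈ M S ∨ ∃ e ∈ M S, (e.1 = f.1 ∨ ¬ Disjoint e.2 f.2) ∧ w f ≤ w e)
    (ν : NNReal)
    (hν : IsGreatest {x : NNReal | ∃ N ⊆ E,
      (∀ e ∈ N, ∀ e' ∈ N, e ≠ e' → e.1 ≠ e'.1 ∧ Disjoint e.2 e'.2) ∧
      x = ∑ e ∈ N, w e} ν) :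
    p / (d + 1) * (ν : ℝ) ≤
      ∑ S : Finset L,
        p ^ S.card * (1 - p) ^ (Fintype.card L - S.card) *
          ((∑ e ∈ M S, w e : NNReal) : ℝ) :=
  sampled_greedy_hypergraph_expectation_general d E w hE p hp0 hp1 M hME hdom ν hν
end
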